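/- arXiv:math/0610222 — 6 statements merged into one kernel-verified Lean document; each statement's English description precedes it below -/
import Mathlib

section
/- Let ℓ : E → ℝ be a length function on a countable set E of edges with ℓ(e) > 0 for all e, and let s > 1 be real. Then the doubly indexed family ((4ℓ(e)²)/((2k+1)²π² + 4ℓ(e)²))^{s/2} indexed by (k, e) ∈ ℤ × E is summable if and only if ∑_{e ∈ E} ℓ(e)^s < ∞. -/
/-!
Dropping `4ℓ(e)²` from the denominator bounds the `(k, e)` term by
`(2/π)^s |2k+1|^{-s} ℓ(e)^s`, a product of two summable families when `∑ ℓ(e)^s < ∞` and `s > 1`.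
Conversely the `k = 0` terms alone are summable, so they tend to zero along the cofinite filter;
since they are bounded below by a positive constant where `ℓ(e) ≥ 1`, all but finitely many edges
have `ℓ(e) < 1`, and there the `k = 0` term dominates a constant multiple of `ℓ(e)^s`.
-/

open Real Filter

noncomputable def diracTerm (s t : ℝ) (k : ℤ) : ℝ :=
  ((4 * t ^ 2) / ((2 * (k : ℝ) + 1) ^ 2 * π ^ 2 + 4 * t ^ 2)) ^ (s / 2)

lemma diracTerm_zero (s t : ℝ) : diracTerm s t 0 = ((4 * t ^ 2) / (π ^ 2 + 4 * t ^ 2)) ^ (s / 2) := by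
  simp [diracTerm]

lemma diracTerm_nonneg (s t : ℝ) (k : ℤ) : 0 ≤ diracTerm s t k := by
  unfold diracTerm; positivity

lemma abs_two_mul_add_one_pos (k : ℤ) : 0 < |2 * (k : ℝ) + 1| :=
  abs_pos.2 (by exact_mod_cast (by omega : 2 * k + 1 ≠ 0))

lemma summable_abs_two_mul_add_one_rpow_neg {s : ℝ} (hs : 1 < s) :
    Summable fun k : ℤ => |2 * (k : ℝ) + 1| ^ (-s) := by
  have h := (summable_abs_int_rpow hs).comp_injective
    (i := fun k : ℤ => 2 * k + 1) fun a b h => by dsimp at h; omega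
  simpa [Function.comp_def] using h

lemma sq_rpow_div_two {t : ℝ} (ht : 0 ≤ t) (s : ℝ) : (t ^ 2) ^ (s / 2) = t ^ s := by
  rw [← rpow_natCast, ← rpow_mul ht, Nat.cast_ofNat, mul_div_cancel₀ s two_ne_zero]

lemma diracTerm_le {s t : ℝ} (hs : 0 ≤ s) (ht : 0 ≤ t) (k : ℤ) :
    diracTerm s t k ≤ (2 / π) ^ s * |2 * (k : ℝ) + 1| ^ (-s) * t ^ s := by
  have hu := abs_two_mul_add_one_pos k
  set u := |2 * (k : ℝ) + 1|
  have hu2 : (2 * (k : ℝ) + 1) ^ 2 = u ^ 2 := (sq_abs _).symm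
  have hbase : (4 * t ^ 2) / ((2 * (k : ℝ) + 1) ^ 2 * π ^ 2 + 4 * t ^ 2) ≤
      (2 / π * u⁻¹ * t) ^ 2 := by
    have hsq : (2 / π * u⁻¹ * t) ^ 2 = (4 * t ^ 2) / (u ^ 2 * π ^ 2) := by
      field_simp
      ring
    rw [hsq, hu2]
    exact div_le_div_of_nonneg_left (by positivity) (by positivity) (by nlinarith)
  calc diracTerm s t k ≤ ((2 / π * u⁻¹ * t) ^ 2) ^ (s / 2) :=
        rpow_le_rpow (by positivity) hbase (by positivity)
    _ = (2 / π * u⁻¹ * t) ^ s := sq_rpow_div_two (by positivity) s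
    _ = (2 / π) ^ s * u ^ (-s) * t ^ s := by
        rw [mul_rpow (by positivity) ht, mul_rpow (by positivity) (by positivity),
          inv_rpow hu.le, ← rpow_neg hu.le]

lemma rpow_le_diracTerm_zero {s t : ℝ} (hs : 0 ≤ s) (ht : 1 ≤ t) :
    (4 / (π ^ 2 + 4)) ^ (s / 2) ≤ diracTerm s t 0 := by
  rw [diracTerm_zero]
  refine rpow_le_rpow (by positivity) ?_ (by positivity)
  rw [div_le_div_iff₀ (by positivity) (by positivity)]
  nlinarith [mul_nonneg (by nlinarith : (0 : ℝ) ≤ t ^ 2 - 1) (sq_nonneg π)]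

lemma mul_rpow_le_diracTerm_zero {s t : ℝ} (hs : 0 ≤ s) (ht₀ : 0 ≤ t) (ht₁ : t ≤ 1) :
    (4 / (π ^ 2 + 4)) ^ (s / 2) * t ^ s ≤ diracTerm s t 0 := by
  rw [diracTerm_zero, ← sq_rpow_div_two ht₀ s, ← mul_rpow (by positivity) (by positivity)]
  refine rpow_le_rpow (by positivity) ?_ (by positivity)
  rw [div_mul_eq_mul_div, mul_comm]
  exact div_le_div_of_nonneg_left (by positivity) (by positivity) (by nlinarith)

lemma summable_diracTerm_of_summable_rpow {E : Type*} {ℓ : E → ℝ} {s : ℝ} (hs : 1 < s)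
    (hℓ : ∀ e, 0 ≤ ℓ e) (h : Summable fun e => ℓ e ^ s) :
    Summable fun p : ℤ × E => diracTerm s (ℓ p.2) p.1 := by
  have hmajorant : Summable fun p : ℤ × E =>
      (2 / π) ^ s * |2 * (p.1 : ℝ) + 1| ^ (-s) * ℓ p.2 ^ s :=
    ((summable_abs_two_mul_add_one_rpow_neg hs).mul_left _).mul_of_nonneg h
      (fun k => by have := abs_two_mul_add_one_pos k; positivity)
      (fun e => rpow_nonneg (hℓ e) s)
  exact hmajorant.of_nonneg_of_le (fun p => diracTerm_nonneg _ _ _)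
    fun p => diracTerm_le (by linarith) (hℓ p.2) p.1

lemma summable_rpow_of_summable_diracTerm_zero {E : Type*} {ℓ : E → ℝ} {s : ℝ} (hs : 0 ≤ s)
    (hℓ : ∀ e, 0 ≤ ℓ e) (h : Summable fun e => diracTerm s (ℓ e) 0) :
    Summable fun e => ℓ e ^ s := by
  set c : ℝ := (4 / (π ^ 2 + 4)) ^ (s / 2)
  have hc : 0 < c := by positivity
  have hsmall : ∀ᶠ e in cofinite, ℓ e < 1 :=
    (h.tendsto_cofinite_zero.eventually (gt_mem_nhds hc)).mono fun e he =>
      lt_of_not_ge fun h1 => (rpow_le_diracTerm_zero hs h1).not_gt he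
  refine (h.mul_left c⁻¹).of_norm_bounded_eventually (hsmall.mono fun e he => ?_)
  rw [norm_of_nonneg (rpow_nonneg (hℓ e) s), le_inv_mul_iff₀ hc]
  exact mul_rpow_le_diracTerm_zero hs (hℓ e) he.le

theorem summable_dirac_eigenvalues_iff_general (E : Type*)
    (ℓ : E → ℝ) (hpos : ∀ e, 0 < ℓ e) (s : ℝ) (hs : 1 < s) :
    Summable (fun p : ℤ × E =>
        ((4 * ℓ p.2 ^ 2) / ((2 * (p.1 : ℝ) + 1) ^ 2 * π ^ 2 + 4 * ℓ p.2 ^ 2)) ^ (s / 2)) ↔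
      Summable (fun e => ℓ e ^ s) := by
  have hℓ : ∀ e, 0 ≤ ℓ e := fun e => (hpos e).le
  show Summable (fun p : ℤ × E => diracTerm s (ℓ p.2) p.1) ↔ _
  refine ⟨fun h => ?_, summable_diracTerm_of_summable_rpow hs hℓ⟩
  have hzero : Summable fun e => diracTerm s (ℓ e) 0 :=
    h.comp_injective (i := Prod.mk (0 : ℤ)) (Prod.mk_right_injective 0)
  exact summable_rpow_of_summable_diracTerm_zero (by linarith) hℓ hzero

/-- For a countable edge set `E` with positive length function `ℓ` and a real `s > 1`,
the doubly indexed family `((4 ℓ(e)²)/((2k+1)² π² + 4 ℓ(e)²))^{s/2}`, `(k, e) ∈ ℤ × E`,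
is summable iff `∑_e ℓ(e)^s < ∞`. -/
theorem summable_dirac_eigenvalues_iff (E : Type*) [Countable E]
    (ℓ : E → ℝ) (hpos : ∀ e, 0 < ℓ e) (s : ℝ) (hs : 1 < s) :
    Summable (fun p : ℤ × E =>
        ((4 * ℓ p.2 ^ 2) / ((2 * (p.1 : ℝ) + 1) ^ 2 * π ^ 2 + 4 * ℓ p.2 ^ 2)) ^ (s / 2)) ↔
      Summable (fun e => ℓ e ^ s) :=
  summable_dirac_eigenvalues_iff_general E ℓ hpos s hs
end

section
/- For every complex number z with Re(z) > log 3 / log 2, one has ∑_{n=0}^∞ ∑_{k∈ℤ} 3^n · 2^{-n·z} · |k + 1/2|^{-z} = 2^{z+1} · (1 - 2^{-z})/(1 - 3·2^{-z}) · ζ(z), where ζ is the Riemann zeta function and all series converge absolutely. -/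
open Complex

/-- For `Re z > log 3 / log 2`, the double sum of `3^n 2^{-nz} |k+1/2|^{-z}` over `n ∈ ℕ₀`,
`k ∈ ℤ` converges absolutely and equals `2^{z+1} (1-2^{-z})/(1-3·2^{-z}) ζ(z)`. -/
theorem sierpinski_trace_formula (z : ℂ) (hz : Real.log 3 / Real.log 2 < z.re) :
    Summable (fun p : ℕ × ℤ =>
      ‖(3 : ℂ) ^ p.1 * (2 : ℂ) ^ (-(p.1 : ℂ) * z) * ((|(p.2 : ℝ) + 1 / 2| : ℝ) : ℂ) ^ (-z)‖) ∧
    ∑' n : ℕ, ∑' k : ℤ,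
        (3 : ℂ) ^ n * (2 : ℂ) ^ (-(n : ℂ) * z) * ((|(k : ℝ) + 1 / 2| : ℝ) : ℂ) ^ (-z) =
      2 ^ (z + 1) * (1 - 2 ^ (-z)) / (1 - 3 * 2 ^ (-z)) * riemannZeta z := by
  set p := z.re with hp
  have hlog2 : (0:ℝ) < Real.log 2 := Real.log_pos (by norm_num)
  have hlog32 : Real.log 2 < Real.log 3 := Real.log_lt_log (by norm_num) (by norm_num)
  have hp1 : 1 < p := lt_trans ((one_lt_div hlog2).mpr hlog32) hz
  have hp0 : 0 < p := lt_trans one_pos hp1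
  have h3lt : (3:ℝ) < 2 ^ p := by
    rw [Real.lt_rpow_iff_log_lt (by norm_num) (by norm_num)]
    exact (div_lt_iff₀ hlog2).mp hz
  set r : ℂ := 3 * 2 ^ (-z) with hr_def
  have hnorm2 : ‖(2:ℂ) ^ (-z)‖ = (2:ℝ) ^ (-p) := by
    have h2 : ((2:ℝ) : ℂ) = (2:ℂ) := by norm_num
    rw [← h2, Complex.norm_cpow_eq_rpow_re_of_pos (by norm_num)]
    simp [hp]
  have hrnorm : ‖r‖ < 1 := by
    rw [hr_def, norm_mul, hnorm2]
    have h3 : ‖(3:ℂ)‖ = 3 := by norm_num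
    rw [h3, Real.rpow_neg (by norm_num), mul_inv_lt_iff₀' (Real.rpow_pos_of_pos (by norm_num) p)]
    linarith
  -- the inner function
  set h : ℤ → ℂ := fun k => ((|(k : ℝ) + 1 / 2| : ℝ) : ℂ) ^ (-z) with hh_def
  -- positivity of bases
  have habs_pos : ∀ k : ℤ, 0 < |(k : ℝ) + 1 / 2| := by
    intro k
    rw [abs_pos]
    intro hc
    have h2 : ((2 * k + 1 : ℤ) : ℝ) = 0 := by push_cast; linarith
    have := Int.cast_ne_zero (α := ℝ) (n := 2 * k + 1) |>.mpr (by omega)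
    exact this h2
  have hnorm_h : ∀ k : ℤ, ‖h k‖ = |(k : ℝ) + 1 / 2| ^ (-p) := by
    intro k
    rw [hh_def]
    rw [Complex.norm_cpow_eq_rpow_re_of_pos (habs_pos k)]
    simp [hp]
  -- real summability over ℕ of (n + 1/2)^(-p)
  have hS0 : Summable (fun n : ℕ => ((n : ℝ) + 1 / 2) ^ (-p)) := by
    have hbase : Summable (fun n : ℕ => ((n : ℝ) + 1) ^ (-p)) := by
      have := (Real.summable_nat_rpow (p := -p)).mpr (by linarith)
      have := (summable_nat_add_iff 1).mpr this
      exact this.congr fun n => by push_cast; ring_nf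
    refine Summable.of_nonneg_of_le (fun n => Real.rpow_nonneg (by positivity) _)
      (fun n => ?_) (hbase.mul_left ((2:ℝ) ^ p))
    have h1 : ((n : ℝ) + 1) * (1 / 2) ≤ (n : ℝ) + 1 / 2 := by
      have : (0:ℝ) ≤ n := Nat.cast_nonneg n
      linarith
    calc ((n : ℝ) + 1 / 2) ^ (-p) ≤ (((n : ℝ) + 1) * (1 / 2)) ^ (-p) :=
          Real.rpow_le_rpow_of_nonpos (by positivity) h1 (by linarith)
      _ = 2 ^ p * ((n : ℝ) + 1) ^ (-p) := by
          have hn1 : (0:ℝ) ≤ (n : ℝ) + 1 := by positivity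
          rw [Real.mul_rpow hn1 (by norm_num),
            show ((1:ℝ)/2) ^ (-p) = 2 ^ p by
              rw [one_div, Real.inv_rpow (by norm_num), ← Real.rpow_neg (by norm_num), neg_neg]]
          ring
  -- identification of h on nonneg and negative integers
  have habs_nat : ∀ n : ℕ, |((n : ℤ) : ℝ) + 1 / 2| = (n : ℝ) + 1 / 2 := by
    intro n
    push_cast
    exact abs_of_nonneg (by positivity)
  have habs_neg : ∀ n : ℕ, |((-(n + 1) : ℤ) : ℝ) + 1 / 2| = (n : ℝ) + 1 / 2 := by
    intro n
    push_cast
    rw [abs_of_nonpos (by linarith [Nat.cast_nonneg (α := ℝ) n])]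
    ring
  -- summability of ‖h ·‖ over ℤ
  have hgZ : Summable (fun k : ℤ => ‖h k‖) := by
    refine Summable.of_nat_of_neg_add_one ?_ ?_
    · exact hS0.congr fun n => by rw [hnorm_h, habs_nat]
    · exact hS0.congr fun n => by rw [hnorm_h, habs_neg]
  have hhZ : Summable h := hgZ.of_norm
  -- summability over ℕ parts in ℂ
  have hhnat : Summable (fun n : ℕ => h (n : ℤ)) := hhZ.comp_injective (fun a b hab => by exact_mod_cast hab)
  have hhneg : Summable (fun n : ℕ => h (-(n + 1) : ℤ)) := by
    refine hhZ.comp_injective ?_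
    intro a b hab
    simpa using hab
  -- zeta-related sums
  set f : ℕ → ℂ := fun n => (n : ℂ) ^ (-z) with hf_def
  have hzne : z ≠ 0 := by
    intro hc
    rw [hc] at hp
    simp at hp
    rw [hp] at hp1
    linarith
  have hf_norm_eq : ∀ n : ℕ, ‖f n‖ = (n : ℝ) ^ (-p) := by
    intro n
    cases n with
    | zero =>
      simp only [hf_def, Nat.cast_zero]
      rw [Complex.zero_cpow (neg_ne_zero.mpr hzne), Real.zero_rpow (by linarith : -p ≠ 0)]
      simp
    | succ m =>
      simp only [hf_def]
      rw [show ((m + 1 : ℕ) : ℂ) = (((m + 1 : ℕ) : ℝ) : ℂ) by push_cast; ring,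
        Complex.norm_cpow_eq_rpow_re_of_pos (by positivity)]
      simp [hp]
  have hf_norm : Summable (fun n : ℕ => ‖f n‖) :=
    (Real.summable_nat_rpow.mpr (by linarith : -p < -1)).congr fun n => (hf_norm_eq n).symm
  have hf : Summable f := hf_norm.of_norm
  have he : Summable (fun k : ℕ => f (2 * k)) :=
    (hf_norm.comp_injective (fun a b hab => by omega)).of_norm
  have ho : Summable (fun k : ℕ => f (2 * k + 1)) :=
    (hf_norm.comp_injective (fun a b hab => by omega)).of_norm
  have heval : ∀ n : ℕ, f (2 * n) = 2 ^ (-z) * f n := by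
    intro n
    simp only [hf_def]
    rw [show ((2 * n : ℕ) : ℂ) = ((2 : ℝ) : ℂ) * ((n : ℝ) : ℂ) by push_cast; ring,
      mul_cpow_ofReal_nonneg (by norm_num) (Nat.cast_nonneg n)]
    norm_num
  have hzeta : riemannZeta z = ∑' n : ℕ, f n := by
    rw [zeta_eq_tsum_one_div_nat_cpow (by rw [← hp]; exact hp1)]
    exact tsum_congr fun n => by rw [one_div, ← Complex.cpow_neg]
  have hodd : ∑' n : ℕ, f (2 * n + 1) = (1 - 2 ^ (-z)) * riemannZeta z := by
    have h2 := tsum_even_add_odd he ho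
    have heven : ∑' n : ℕ, f (2 * n) = 2 ^ (-z) * ∑' n : ℕ, f n := by
      rw [← tsum_mul_left]
      exact tsum_congr heval
    rw [heven] at h2
    rw [hzeta]
    linear_combination h2
  -- the half-integer nat sum
  have h12 : (((1 : ℝ) / 2 : ℝ) : ℂ) ^ (-z) = 2 ^ z := by
    have harg : (2 : ℂ).arg ≠ Real.pi := by
      rw [show (2 : ℂ) = ((2 : ℝ) : ℂ) by norm_num,
        Complex.arg_ofReal_of_nonneg (by norm_num)]
      exact fun hc => Real.pi_ne_zero hc.symm
    rw [show (((1 : ℝ) / 2 : ℝ) : ℂ) = (2 : ℂ)⁻¹ by norm_num,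
      Complex.inv_cpow _ _ harg, ← Complex.cpow_neg, neg_neg]
  have hS : ∀ n : ℕ, (((n : ℝ) + 1 / 2 : ℝ) : ℂ) ^ (-z) = 2 ^ z * f (2 * n + 1) := by
    intro n
    rw [show (((n : ℝ) + 1 / 2 : ℝ) : ℂ)
          = (((2 * n + 1 : ℕ) : ℝ) : ℂ) * (((1 : ℝ) / 2 : ℝ) : ℂ) by push_cast; ring,
      mul_cpow_ofReal_nonneg (Nat.cast_nonneg _) (by norm_num), h12, mul_comm]
    simp only [hf_def]
    norm_cast
  have hnat_eval : ∀ n : ℕ, h (n : ℤ) = 2 ^ z * f (2 * n + 1) := by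
    intro n
    simp only [hh_def]
    rw [habs_nat n, hS n]
  have hHval : ∑' k : ℤ, h k = 2 ^ (z + 1) * (1 - 2 ^ (-z)) * riemannZeta z := by
    rw [tsum_of_nat_of_neg_add_one hhnat hhneg]
    have hsym : ∀ n : ℕ, h (-((n : ℤ) + 1)) = h (n : ℤ) := by
      intro n
      simp only [hh_def]
      rw [show (-((n : ℤ) + 1)) = (-((n : ℕ) + 1) : ℤ) by push_cast; ring]
      rw [habs_neg n, habs_nat n]
    have hnatsum : ∑' n : ℕ, h (n : ℤ) = 2 ^ z * ((1 - 2 ^ (-z)) * riemannZeta z) := by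
      rw [← hodd, ← tsum_mul_left]
      exact tsum_congr hnat_eval
    have hnegsum : ∑' n : ℕ, h (-((n : ℤ) + 1)) = ∑' n : ℕ, h (n : ℤ) :=
      tsum_congr hsym
    rw [hnegsum, hnatsum, show (2 : ℂ) ^ (z + 1) = 2 ^ z * 2 by
      rw [Complex.cpow_add _ _ (two_ne_zero), Complex.cpow_one]]
    ring
  -- geometric part
  have hgeo : Summable (fun n : ℕ => r ^ n) := summable_geometric_iff_norm_lt_one.mpr hrnorm
  have htsum_geo : ∑' n : ℕ, r ^ n = (1 - r)⁻¹ := tsum_geometric_of_norm_lt_one hrnorm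
  have hterm : ∀ (n : ℕ) (k : ℤ),
      (3 : ℂ) ^ n * (2 : ℂ) ^ (-(n : ℂ) * z) * h k = r ^ n * h k := by
    intro n k
    congr 1
    rw [show (-(n : ℂ) * z) = (n : ℕ) * (-z) by push_cast; ring,
      Complex.cpow_nat_mul, hr_def, mul_pow]
  have h1r : (1 : ℂ) - r ≠ 0 := by
    intro hc
    have hr1 : r = 1 := by linear_combination -hc
    rw [hr1] at hrnorm
    simp at hrnorm
  constructor
  · have hfgeo : Summable (fun n : ℕ => ‖r‖ ^ n) :=
      summable_geometric_of_lt_one (norm_nonneg r) hrnorm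
    have hprod := hfgeo.mul_of_nonneg hgZ
      (fun n => pow_nonneg (norm_nonneg r) n) (fun k => norm_nonneg _)
    refine hprod.congr fun q => ?_
    rw [hterm q.1 q.2, norm_mul (r ^ q.1) (h q.2), norm_pow]
  · calc ∑' n : ℕ, ∑' k : ℤ,
        (3 : ℂ) ^ n * (2 : ℂ) ^ (-(n : ℂ) * z) * ((|(k : ℝ) + 1 / 2| : ℝ) : ℂ) ^ (-z)
        = ∑' n : ℕ, r ^ n * ∑' k : ℤ, h k := by
          refine tsum_congr fun n => ?_
          rw [← tsum_mul_left]
          exact tsum_congr fun k => hterm n k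
      _ = (∑' n : ℕ, r ^ n) * ∑' k : ℤ, h k := tsum_mul_right
      _ = (1 - r)⁻¹ * (2 ^ (z + 1) * (1 - 2 ^ (-z)) * riemannZeta z) := by
          rw [htsum_geo, hHval]
      _ = 2 ^ (z + 1) * (1 - 2 ^ (-z)) / (1 - 3 * 2 ^ (-z)) * riemannZeta z := by
          have h1r' : (1 : ℂ) - 3 * 2 ^ (-z) ≠ 0 := by rw [← hr_def]; exact h1r
          rw [hr_def, div_mul_eq_mul_div, eq_div_iff h1r', mul_comm, ← mul_assoc,
            mul_inv_cancel₀ h1r', one_mul]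
end

section
/- Let p ≥ 1 and let (ℓ_e)_{e∈E} be a family of positive reals indexed by a countable set E with ∑_e ℓ_e^p < ∞. Let P ⊂ ℓ^p(E) be the union, over e ∈ E, of the segments {x_e + t·δ_e : t ∈ [0, ℓ_e]}, where each x_e ∈ ℓ^p(E) is a finite sum ∑_{j} ℓ_{e_j} δ_{e_j} over the edges of the unique path from a fixed root to the initial vertex of e (tree structure). Then the closure of P in ℓ^p(E) is norm compact. -/
open scoped ENNReal

set_option maxHeartbeats 1000000

/-- For a `p`-summable infinite tree embedded in `ℓ^p(E)` via the canonical path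
construction (each edge `e` drawn as the segment from `x e` to `x e + ℓ(e)·δ_e`, where
`x e = ∑_{j ∈ path e} ℓ(j)·δ_j` is the finite sum over the unique root path, which does
not contain `e` itself), the closure of the set of points is norm compact. -/
theorem tree_parameterization_closure_compact
    (E : Type*) [Countable E] [DecidableEq E]
    (p : ℝ≥0∞) [Fact (1 ≤ p)] (hp : p ≠ ⊤)
    (ℓ : E → ℝ) (hpos : ∀ e, 0 < ℓ e)
    (hsum : Summable (fun e => ℓ e ^ p.toReal))
    (x : E → lp (fun _ : E => ℝ) p)
    (path : E → Finset E) (hself : ∀ e, e ∉ path e)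
    (hx : ∀ e, x e = ∑ j ∈ path e, lp.single p j (ℓ j)) :
    IsCompact (closure
      (⋃ e : E, (fun t : ℝ => x e + lp.single p e t) '' Set.Icc 0 (ℓ e))) := by
  classical
  set q := p.toReal with hqdef
  have hq1 : 1 ≤ q := by
    rw [hqdef, ← ENNReal.toReal_one]
    exact ENNReal.toReal_mono hp (Fact.out)
  have hq : 0 < q := lt_of_lt_of_le one_pos hq1
  -- The "box" K
  set K : Set (lp (fun _ : E => ℝ) p) := {y | ∀ j, |y j| ≤ ℓ j} with hK
  -- evaluation is continuous
  have hcont : ∀ j : E, Continuous fun y : lp (fun _ : E => ℝ) p => y j := by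
    intro j
    refine (LipschitzWith.of_dist_le_mul (K := 1) fun y z => ?_).continuous
    rw [NNReal.coe_one, one_mul, dist_eq_norm, dist_eq_norm]
    have := lp.norm_apply_le_norm ((zero_lt_one.trans_le (Fact.out : 1 ≤ p)).ne') (y - z) j
    simpa [lp.coeFn_sub] using this
  have hKclosed : IsClosed K := by
    have : K = ⋂ j : E, {y : lp (fun _ : E => ℝ) p | |y j| ≤ ℓ j} := by
      ext y; simp [hK]
    rw [this]
    exact isClosed_iInter fun j =>
      isClosed_le (continuous_abs.comp (hcont j)) continuous_const
  -- lp.single is 1-Lipschitz in its value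
  have hsingle_sub : ∀ (j : E) (a b : ℝ),
      lp.single (E := fun _ : E => ℝ) p j a - lp.single (E := fun _ : E => ℝ) p j b
        = lp.single (E := fun _ : E => ℝ) p j (a - b) := by
    intro j a b
    apply lp.ext
    funext k
    by_cases hk : k = j
    · subst hk
      simp [lp.coeFn_sub, lp.single_apply_self]
    · simp [lp.coeFn_sub, lp.single_apply_ne p j _ hk]
  have hsingle_lip : ∀ j : E, Continuous fun a : ℝ => lp.single (E := fun _ : E => ℝ) p j a := by
    intro j
    refine (LipschitzWith.of_dist_le_mul (K := 1) fun a b => ?_).continuous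
    rw [NNReal.coe_one, one_mul, dist_eq_norm, dist_eq_norm, hsingle_sub]
    exact le_of_eq (lp.norm_single (E := fun _ : E => ℝ) (zero_lt_one.trans_le (Fact.out : 1 ≤ p)) j (a - b))
  -- K is totally bounded
  have hKtb : TotallyBounded K := by
    rw [Metric.totallyBounded_iff]
    intro ε hε
    have hδ : (0 : ℝ) < (ε / 2) ^ q := Real.rpow_pos_of_pos (by linarith) q
    -- choose a finite set S with small tail
    obtain ⟨S, hS⟩ : ∃ S : Finset E, ∑' j : {x // x ∉ S}, ℓ j ^ q < (ε / 2) ^ q := by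
      have := (tendsto_order.1 (tendsto_tsum_compl_atTop_zero fun e => ℓ e ^ q)).2 _ hδ
      exact this.exists
    -- truncation map
    set T : lp (fun _ : E => ℝ) p → lp (fun _ : E => ℝ) p :=
      fun y => ∑ j ∈ S, lp.single p j (y j) with hT
    -- tail estimate for y ∈ K
    have htail : ∀ y ∈ K, ‖y - T y‖ < ε / 2 := by
      intro y hy
      have hsummy : Summable fun i => ‖y i‖ ^ q := (lp.memℓp y).summable hq
      have h1 : ‖y - T y‖ ^ q = ∑' i : {x // x ∉ S}, ‖y i‖ ^ q := by
        have h2 := lp.norm_compl_sum_single hq y S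
        have h3 := Summable.sum_add_tsum_compl (s := S) hsummy
        have h4 : ‖y‖ ^ q = ∑' i, ‖y i‖ ^ q := lp.norm_rpow_eq_tsum hq y
        have h5 : ∑' (i : ↑(↑S : Set E)ᶜ), ‖y i‖ ^ q
            = ∑' i : {x // x ∉ S}, ‖y i‖ ^ q := rfl
        rw [hT, h2, h4, ← h3, h5]
        ring
      have h6 : ∑' i : {x // x ∉ S}, ‖y i‖ ^ q ≤ ∑' j : {x // x ∉ S}, ℓ j ^ q := by
        have hs1 : Summable fun i : {x // x ∉ S} => ‖y (i : E)‖ ^ q := by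
          have := hsummy.subtype {x | x ∉ S}
          exact this
        have hs2 : Summable fun i : {x // x ∉ S} => ℓ (i : E) ^ q := by
          have := hsum.subtype {x | x ∉ S}
          exact this
        refine Summable.tsum_le_tsum (fun i => ?_) hs1 hs2
        exact Real.rpow_le_rpow (norm_nonneg _) (by simpa using hy (i : E)) hq.le
      have h7 : ‖y - T y‖ ^ q < (ε / 2) ^ q := lt_of_le_of_lt (h1 ▸ h6) hS
      by_contra hcon
      push_neg at hcon
      exact absurd (Real.rpow_le_rpow (by linarith) hcon hq.le) (not_le.2 h7)
    -- compact box in the product space and the finite-sum map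
    set g : (E → ℝ) → lp (fun _ : E => ℝ) p :=
      fun c => ∑ j ∈ S, lp.single p j (c j) with hg
    have hgcont : Continuous g := by
      apply continuous_finset_sum
      intro j _
      exact (hsingle_lip j).comp (continuous_apply j)
    have hBcomp : IsCompact (Set.pi Set.univ fun j : E => Set.Icc (-(ℓ j)) (ℓ j)) :=
      isCompact_univ_pi fun j => isCompact_Icc
    have hK' : IsCompact (g '' (Set.pi Set.univ fun j : E => Set.Icc (-(ℓ j)) (ℓ j))) :=
      hBcomp.image hgcont
    obtain ⟨t, htfin, htnet⟩ :=
      Metric.totallyBounded_iff.1 hK'.totallyBounded (ε / 2) (by linarith)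
    refine ⟨t, htfin, fun y hy => ?_⟩
    have hc : (fun j => y j) ∈ Set.pi Set.univ fun j : E => Set.Icc (-(ℓ j)) (ℓ j) := by
      intro j _
      have := hy j
      rw [Set.mem_Icc]
      constructor <;> [linarith [neg_abs_le (y j)]; linarith [le_abs_self (y j)]]
    have hmem : T y ∈ g '' (Set.pi Set.univ fun j : E => Set.Icc (-(ℓ j)) (ℓ j)) :=
      ⟨fun j => y j, hc, rfl⟩
    obtain ⟨c, hct, hcball⟩ := Set.mem_iUnion₂.1 (htnet hmem)
    refine Set.mem_iUnion₂.2 ⟨c, hct, ?_⟩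
    rw [Metric.mem_ball] at hcball ⊢
    calc dist y c ≤ dist y (T y) + dist (T y) c := dist_triangle _ _ _
      _ < ε / 2 + ε / 2 := by
          have := htail y hy
          rw [dist_eq_norm]
          exact add_lt_add_of_le_of_lt this.le hcball
      _ = ε := by ring
  -- the curve lies in K
  have hPK : (⋃ e : E, (fun t : ℝ => x e + lp.single p e t) '' Set.Icc 0 (ℓ e)) ⊆ K := by
    rintro y hy
    obtain ⟨e, hy⟩ := Set.mem_iUnion.1 hy
    obtain ⟨s, hs, rfl⟩ := hy
    intro j
    have hco : (x e + lp.single p e s : lp (fun _ : E => ℝ) p) j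
        = (x e) j + (lp.single (E := fun _ : E => ℝ) p e s) j := by
      simp [lp.coeFn_add]
    rw [hco, hx e]
    have hxe : ((∑ i ∈ path e, lp.single p i (ℓ i) : lp (fun _ : E => ℝ) p) : ∀ _ : E, ℝ) j
        = if j ∈ path e then ℓ j else 0 := by
      rw [lp.coeFn_sum]
      rw [Finset.sum_apply]
      by_cases hj : j ∈ path e
      · rw [Finset.sum_eq_single_of_mem j hj]
        · simp [lp.single_apply_self, hj]
        · intro i hi hij
          exact lp.single_apply_ne p i _ hij.symm
      · rw [if_neg hj]
        apply Finset.sum_eq_zero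
        intro i hi
        apply lp.single_apply_ne p i _
        intro h; exact hj (h ▸ hi)
    rw [hxe]
    obtain ⟨hs0, hs1⟩ := hs
    by_cases hj : j ∈ path e
    · have hje : j ≠ e := fun h => hself e (h ▸ hj)
      rw [if_pos hj, lp.single_apply_ne p e _ hje, add_zero,
        abs_of_pos (hpos j)]
    · rw [if_neg hj, zero_add]
      by_cases hje : j = e
      · subst hje
        rw [lp.single_apply_self, abs_of_nonneg hs0]
        exact hs1
      · rw [lp.single_apply_ne p e _ hje]
        simp [(hpos j).le]
  -- conclude
  have hKcomp : IsCompact K := TotallyBounded.isCompact_of_isClosed hKtb hKclosed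
  exact hKcomp.of_isClosed_subset isClosed_closure (closure_minimal hPK hKclosed)
end

section
/- Let p ≥ 1 and q > p, and let T^p ⊂ ℓ^p(E) and T^q ⊂ ℓ^q(E) be the closures of the point sets P_u^p and P_u^q of the p- and q-parameterizations of a p-summable infinite tree (with the same root u). If there is a constant k > 0 such that d_p(x,y) ≤ k·d_∞(x,y) for all x, y ∈ T^p (where d_∞ is the metric from the sup norm), then the identity map on points extends to a bi-Lipschitz homeomorphism between T^p and T^q. -/
open scoped ENNReal NNReal

/-! On `T^p` the identity is `1`-Lipschitz into `ℓ^q`, since `‖f‖_q ≤ ‖f‖_p`, and the hypothesis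
`d_p ≤ k d_∞` together with `d_∞ ≤ d_q` makes it anti-Lipschitz. An anti-Lipschitz map on the
complete space `T^p` has closed range, which is therefore the closure of the image of the points. -/

theorem image_closure_eq_closure_image_of_antilipschitz {X Y : Type*} [PseudoEMetricSpace X]
    [CompleteSpace X] [EMetricSpace Y] {f : X → Y} {s : Set X} {K : ℝ≥0}
    (hf : UniformContinuous f) (hanti : AntilipschitzWith K ((closure s).domRestrict f)) :
    f '' closure s = closure (f '' s) := by
  have : CompleteSpace (closure s) := isClosed_closure.completeSpace_coe
  have hclosed : IsClosed (f '' closure s) := by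
    rw [← Set.range_domRestrict]
    exact hanti.isClosed_range (hf.comp uniformContinuous_subtype_val)
  exact (image_closure_subset_closure_image hf.continuous).antisymm
    (closure_minimal (Set.image_mono subset_closure) hclosed)

namespace lp

variable {α : Type*} {E : α → Type*} [∀ i, NormedAddCommGroup (E i)] {p q : ℝ≥0∞}

theorem norm_inclusion_le (hp : p ≠ 0) (hpq : p ≤ q) (f : lp E p) :
    ‖AddSubgroup.inclusion (lp.monotone hpq) f‖ ≤ ‖f‖ := by
  rcases eq_or_ne q ⊤ with rfl | hq
  · exact norm_le_of_forall_le (norm_nonneg' f) fun i => norm_apply_le_norm hp f i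
  have hp' : p ≠ ⊤ := ne_top_of_le_ne_top hq hpq
  have hr : 0 < p.toReal := ENNReal.toReal_pos hp hp'
  have hrs : p.toReal ≤ q.toReal := (ENNReal.toReal_le_toReal hp' hq).mpr hpq
  have hs : q.toReal ≠ 0 := (hr.trans_le hrs).ne'
  refine norm_le_of_forall_sum_le (hr.trans_le hrs) (norm_nonneg' f) fun t => ?_
  -- `‖f i‖ ≤ ‖f‖` lets us trade the surplus exponent `q - p` for a factor `‖f‖ ^ (q - p)`.
  have hsplit : ∀ x : ℝ, 0 ≤ x → x ^ q.toReal = x ^ p.toReal * x ^ (q.toReal - p.toReal) :=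
    fun x hx => by rw [← Real.rpow_add' hx (by simpa using hs), add_sub_cancel]
  calc ∑ i ∈ t, ‖f i‖ ^ q.toReal
      = ∑ i ∈ t, ‖f i‖ ^ p.toReal * ‖f i‖ ^ (q.toReal - p.toReal) :=
        Finset.sum_congr rfl fun i _ => hsplit _ (norm_nonneg _)
    _ ≤ ∑ i ∈ t, ‖f i‖ ^ p.toReal * ‖f‖ ^ (q.toReal - p.toReal) :=
        Finset.sum_le_sum fun i _ => mul_le_mul_of_nonneg_left
          (Real.rpow_le_rpow (norm_nonneg _) (norm_apply_le_norm hp f i) (sub_nonneg.mpr hrs))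
          (by positivity)
    _ = (∑ i ∈ t, ‖f i‖ ^ p.toReal) * ‖f‖ ^ (q.toReal - p.toReal) := (Finset.sum_mul ..).symm
    _ ≤ ‖f‖ ^ p.toReal * ‖f‖ ^ (q.toReal - p.toReal) :=
        mul_le_mul_of_nonneg_right (sum_rpow_le_norm_rpow hr f t)
          (Real.rpow_nonneg (norm_nonneg' f) _)
    _ = ‖f‖ ^ q.toReal := (hsplit _ (norm_nonneg' f)).symm

theorem lipschitzWith_one_inclusion [Fact (1 ≤ p)] [Fact (1 ≤ q)] (hpq : p ≤ q) :
    LipschitzWith 1 (AddSubgroup.inclusion (lp.monotone (E := E) hpq)) := by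
  simpa using AddMonoidHomClass.lipschitz_of_bound (AddSubgroup.inclusion (lp.monotone hpq)) 1
    fun f => by simpa using norm_inclusion_le (zero_lt_one.trans_le Fact.out).ne' hpq f

theorem iSup_norm_sub_le_dist [Fact (1 ≤ p)] (f g : lp E p) : ⨆ i, ‖f i - g i‖ ≤ dist f g :=
  Real.iSup_le (fun i => by
    rw [dist_eq_norm]
    exact norm_apply_le_norm (zero_lt_one.trans_le Fact.out).ne' (f - g) i) dist_nonneg

end lp

theorem tree_parameterizations_biLipschitz_general
    (E : Type*)
    (p q : ℝ≥0∞) [Fact (1 ≤ p)] [Fact (1 ≤ q)] (hpq : p < q)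
    (P : Set (lp (fun _ : E => ℝ) p))
    (k : ℝ)
    (hdom : ∀ a ∈ closure P, ∀ b ∈ closure P,
      dist a b ≤ k * ⨆ e : E, |(a : ∀ _ : E, ℝ) e - (b : ∀ _ : E, ℝ) e|) :
    ∃ (K : ℝ) (Φ : closure P → lp (fun _ : E => ℝ) q),
      0 < K ∧
      (∀ a : closure P, ∀ e : E,
        ((Φ a : lp (fun _ : E => ℝ) q) : ∀ _ : E, ℝ) e =
          ((a : lp (fun _ : E => ℝ) p) : ∀ _ : E, ℝ) e) ∧
      Set.range Φ =
        closure {y : lp (fun _ : E => ℝ) q | ∃ a ∈ P,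
          ∀ e : E, (y : ∀ _ : E, ℝ) e = (a : ∀ _ : E, ℝ) e} ∧
      ∀ a b : closure P,
        dist (Φ a) (Φ b) ≤ K * dist (a : lp (fun _ : E => ℝ) p) b ∧
        dist (a : lp (fun _ : E => ℝ) p) (b : lp (fun _ : E => ℝ) p) ≤
          K * dist (Φ a) (Φ b) := by
  set ι := AddSubgroup.inclusion (lp.monotone (E := fun _ : E => ℝ) hpq.le)
  have hLip : LipschitzWith 1 ι := lp.lipschitzWith_one_inclusion hpq.le
  have hK : 0 < max k 1 := lt_max_of_lt_right one_pos
  have hinv : ∀ a b : closure P, dist (a : lp (fun _ : E => ℝ) p) b ≤ max k 1 * dist (ι a) (ι b) :=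
    fun a b => calc
      _ ≤ k * ⨆ e : E, |(a : ∀ _ : E, ℝ) e - (b : ∀ _ : E, ℝ) e| := hdom a a.2 b b.2
      _ ≤ max k 1 * ⨆ e : E, |(a : ∀ _ : E, ℝ) e - (b : ∀ _ : E, ℝ) e| :=
        mul_le_mul_of_nonneg_right (le_max_left k 1) (Real.iSup_nonneg fun _ => abs_nonneg _)
      _ ≤ max k 1 * dist (ι a) (ι b) := by
        gcongr
        exact lp.iSup_norm_sub_le_dist (ι a) (ι b)
  have hanti : AntilipschitzWith (max k 1).toNNReal ((closure P).domRestrict ι) :=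
    AntilipschitzWith.of_le_mul_dist fun a b => by
      rw [Real.coe_toNNReal _ hK.le]
      exact hinv a b
  have hpoints : {y : lp (fun _ : E => ℝ) q | ∃ a ∈ P,
      ∀ e : E, (y : ∀ _ : E, ℝ) e = (a : ∀ _ : E, ℝ) e} = ι '' P := by
    ext y
    exact ⟨fun ⟨a, ha, hy⟩ => ⟨a, ha, lp.ext (funext fun e => (hy e).symm)⟩,
      by rintro ⟨a, ha, rfl⟩; exact ⟨a, ha, fun _ => rfl⟩⟩
  refine ⟨max k 1, (closure P).domRestrict ι, hK, fun _ _ => rfl, ?_, fun a b => ⟨?_, hinv a b⟩⟩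
  · rw [Set.range_domRestrict, hpoints,
      image_closure_eq_closure_image_of_antilipschitz hLip.uniformContinuous hanti]
  · calc dist (ι a) (ι b) ≤ dist (a : lp (fun _ : E => ℝ) p) b := by
          simpa using hLip.dist_le_mul a b
      _ ≤ max k 1 * dist (a : lp (fun _ : E => ℝ) p) b :=
          le_mul_of_one_le_left dist_nonneg (le_max_right k 1)

/-- For a `p`-summable tree with point set `P` in `ℓ^p(E)` (canonical path
parameterization), if the `ℓ^p` metric is dominated on `T^p = closure P` by a constant
multiple of the sup metric `d_∞`, then the coordinatewise identity map extends to a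
bi-Lipschitz homeomorphism from `T^p` onto `T^q`, for any `q > p`. -/
theorem tree_parameterizations_biLipschitz
    (E : Type*) [Countable E] [DecidableEq E]
    (p q : ℝ≥0∞) [Fact (1 ≤ p)] [Fact (1 ≤ q)] (hp : p ≠ ⊤) (hq : q ≠ ⊤) (hpq : p < q)
    (ℓ : E → ℝ) (hpos : ∀ e, 0 < ℓ e)
    (hsum : Summable (fun e => ℓ e ^ p.toReal))
    (x : E → lp (fun _ : E => ℝ) p)
    (path : E → Finset E) (hself : ∀ e, e ∉ path e)
    (hx : ∀ e, x e = ∑ j ∈ path e, lp.single p j (ℓ j))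
    (P : Set (lp (fun _ : E => ℝ) p))
    (hP : P = ⋃ e : E,
      (fun t : ℝ => x e + lp.single p e t) '' Set.Icc 0 (ℓ e))
    (k : ℝ) (hk : 0 < k)
    (hdom : ∀ a ∈ closure P, ∀ b ∈ closure P,
      dist a b ≤ k * ⨆ e : E, |(a : ∀ _ : E, ℝ) e - (b : ∀ _ : E, ℝ) e|) :
    ∃ (K : ℝ) (Φ : closure P → lp (fun _ : E => ℝ) q),
      0 < K ∧
      (∀ a : closure P, ∀ e : E,
        ((Φ a : lp (fun _ : E => ℝ) q) : ∀ _ : E, ℝ) e =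
          ((a : lp (fun _ : E => ℝ) p) : ∀ _ : E, ℝ) e) ∧
      Set.range Φ =
        closure {y : lp (fun _ : E => ℝ) q | ∃ a ∈ P,
          ∀ e : E, (y : ∀ _ : E, ℝ) e = (a : ∀ _ : E, ℝ) e} ∧
      ∀ a b : closure P,
        dist (Φ a) (Φ b) ≤ K * dist (a : lp (fun _ : E => ℝ) p) b ∧
        dist (a : lp (fun _ : E => ℝ) p) (b : lp (fun _ : E => ℝ) p) ≤
          K * dist (Φ a) (Φ b) :=
  tree_parameterizations_biLipschitz_general E p q hpq P k hdom
end

section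
/- If a path in a parameterized finite graph G from a point x to a point y consists of edges e₁,…,e_k with e_i(ℓ(e_i)) = e_{i+1}(0), then |g(x) − g(y)| ≤ ∑_{j=1}^k ℓ(e_j) for every continuous g : P → ℝ whose composition with each edge parameterization is absolutely continuous with |g′| ≤ 1 a.e.; consequently the metric d_G induced by the graph spectral triple satisfies d_G ≤ d_geo on the points of G. -/
/-- `g` pulled back along each edge parameterization is absolutely continuous with
derivative bounded a.e. by `1`. -/
def EdgewiseAC {T : Type*} {n : ℕ} (ℓ : Fin (n + 1) → ℝ) (e : Fin (n + 1) → ℝ → T)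
    (g : T → ℝ) : Prop :=
  ∀ i, ∃ g' : ℝ → ℝ, Measurable g' ∧
    (∀ᵐ u ∂MeasureTheory.volume, u ∈ Set.Icc 0 (ℓ i) → |g' u| ≤ 1) ∧
    ∀ s ∈ Set.Icc 0 (ℓ i), ∀ t ∈ Set.Icc 0 (ℓ i),
      g (e i t) - g (e i s) = ∫ u in s..t, g' u

/-- Telescoping bound. -/
lemma telescope_abs (F : ℕ → ℝ) (m : ℕ) :
    |F 0 - F m| ≤ ∑ i ∈ Finset.range m, |F i - F (i + 1)| := by
  induction m with
  | zero => simp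
  | succ m ih =>
      rw [Finset.sum_range_succ]
      calc |F 0 - F (m + 1)| = |(F 0 - F m) + (F m - F (m + 1))| := by ring_nf
        _ ≤ |F 0 - F m| + |F m - F (m + 1)| := abs_add_le _ _
        _ ≤ _ := by gcongr

/-- If a path in a parameterized graph consists of consecutive edges `e₀, …, e_n` with
lengths `ℓ i` (so `e_i(ℓ i) = e_{i+1}(0)`), then every continuous `g` whose pullback along
each edge is absolutely continuous with `|g′| ≤ 1` a.e. satisfies
`|g(x) - g(y)| ≤ ∑ ℓ i` for the endpoints `x, y` of the path; consequently the
spectral-triple metric `d_G` (the sup over such `g`) is at most the geodesic distance. -/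
theorem spectral_metric_le_path_length
    (T : Type*) [TopologicalSpace T] (n : ℕ)
    (ℓ : Fin (n + 1) → ℝ) (hℓ : ∀ i, 0 < ℓ i)
    (e : Fin (n + 1) → ℝ → T)
    (hcont : ∀ i, ContinuousOn (e i) (Set.Icc 0 (ℓ i)))
    (hchain : ∀ i : Fin (n + 1), ∀ h : (i : ℕ) + 1 < n + 1,
      e i (ℓ i) = e ⟨(i : ℕ) + 1, h⟩ 0) :
    (∀ g : T → ℝ, Continuous g → EdgewiseAC ℓ e g →
      |g (e 0 0) - g (e (Fin.last n) (ℓ (Fin.last n)))| ≤ ∑ i, ℓ i) ∧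
    sSup {d : ℝ | ∃ g : T → ℝ, Continuous g ∧ EdgewiseAC ℓ e g ∧
        d = |g (e 0 0) - g (e (Fin.last n) (ℓ (Fin.last n)))|} ≤ ∑ i, ℓ i := by
  have main : ∀ g : T → ℝ, Continuous g → EdgewiseAC ℓ e g →
      |g (e 0 0) - g (e (Fin.last n) (ℓ (Fin.last n)))| ≤ ∑ i, ℓ i := by
    intro g _ hac
    -- per-edge bound
    have edge : ∀ i : Fin (n + 1), |g (e i 0) - g (e i (ℓ i))| ≤ ℓ i := by
      intro i
      obtain ⟨g', _, hbd, hint⟩ := hac i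
      have h0 : (0 : ℝ) ∈ Set.Icc 0 (ℓ i) := ⟨le_rfl, (hℓ i).le⟩
      have hl : ℓ i ∈ Set.Icc 0 (ℓ i) := ⟨(hℓ i).le, le_rfl⟩
      have heq : g (e i (ℓ i)) - g (e i 0) = ∫ u in (0:ℝ)..(ℓ i), g' u :=
        hint 0 h0 (ℓ i) hl
      have hae : ∀ᵐ u ∂MeasureTheory.volume, u ∈ Set.uIoc (0:ℝ) (ℓ i) → ‖g' u‖ ≤ 1 := by
        filter_upwards [hbd] with u hu hmem
        rw [Set.uIoc_of_le (hℓ i).le] at hmem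
        exact hu ⟨hmem.1.le, hmem.2⟩
      have := intervalIntegral.norm_integral_le_of_norm_le_const_ae hae
      rw [← heq] at this
      rw [abs_sub_comm]
      calc |g (e i (ℓ i)) - g (e i 0)| ≤ 1 * |ℓ i - 0| := this
        _ = ℓ i := by rw [one_mul, sub_zero, abs_of_pos (hℓ i)]
    -- chain of points
    set F : ℕ → ℝ := fun j =>
      if h : j < n + 1 then g (e ⟨j, h⟩ 0) else g (e (Fin.last n) (ℓ (Fin.last n))) with hF
    have hF0 : F 0 = g (e 0 0) := by simp [hF]
    have hFlast : F (n + 1) = g (e (Fin.last n) (ℓ (Fin.last n))) := by simp [hF]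
    set L : ℕ → ℝ := fun j => if h : j < n + 1 then ℓ ⟨j, h⟩ else 0 with hL
    have hstep : ∀ j ∈ Finset.range (n + 1), |F j - F (j + 1)| ≤ L j := by
      intro j hj
      have hj' : j < n + 1 := Finset.mem_range.mp hj
      rw [hL]; simp only [dif_pos hj']
      by_cases h2 : j + 1 < n + 1
      · rw [hF]
        simp only [dif_pos hj', dif_pos h2]
        rw [← hchain ⟨j, hj'⟩ h2]
        exact edge ⟨j, hj'⟩
      · have hlast : (⟨j, hj'⟩ : Fin (n + 1)) = Fin.last n := by
          ext; simp only [Fin.val_last]; omega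
        rw [hF]
        simp only [dif_pos hj', dif_neg h2, hlast]
        exact edge (Fin.last n)
    calc |g (e 0 0) - g (e (Fin.last n) (ℓ (Fin.last n)))| = |F 0 - F (n + 1)| := by
          rw [hF0, hFlast]
      _ ≤ ∑ j ∈ Finset.range (n + 1), |F j - F (j + 1)| := telescope_abs F (n + 1)
      _ ≤ ∑ j ∈ Finset.range (n + 1), L j := Finset.sum_le_sum hstep
      _ = ∑ i, ℓ i := by
          rw [← Fin.sum_univ_eq_sum_range L (n + 1)]
          exact Finset.sum_congr rfl fun i _ => by
            simp [hL, i.isLt]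
            intro h; exact absurd h (by have := i.isLt; omega)
  refine ⟨main, Real.sSup_le ?_ ?_⟩
  · rintro d ⟨g, hg, hac, rfl⟩
    exact main g hg hac
  · exact Finset.sum_nonneg fun i _ => (hℓ i).le
end

section
/- For any real s, the double series ∑_{n=1}^∞ 3^{n-1}·∑_{k=0}^∞ (2^{n-1}(2k+1))^{-s} of reciprocal eigenvalue powers (eigenvalues 2^{n-1}(2k+1) with multiplicity 3^{n-1}, over n ≥ 1, k ≥ 0) converges if and only if s > log 3/log 2. -/
/-!
Writing `r = 3 · 2^{-s}`, the general term factors as `r^n · (2k+1)^{-s}`, so the double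
series is a product of a geometric series and an odd-integer `p`-series, and converges iff
both factors do: `r < 1`, i.e. `s > log 3 / log 2`, and `s > 1`. The second condition is
implied by the first because `log 3 / log 2 > 1`.
-/

open Real

lemma summable_prod_mul_iff {ι ι' : Type*} {f : ι → ℝ} {g : ι' → ℝ}
    (hf : 0 ≤ f) (hg : 0 ≤ g) {i₀ : ι} (hi₀ : f i₀ ≠ 0) {j₀ : ι'} (hj₀ : g j₀ ≠ 0) :
    Summable (fun p : ι × ι' => f p.1 * g p.2) ↔ Summable f ∧ Summable g := by
  refine ⟨fun h => ⟨?_, ?_⟩, fun h => h.1.mul_of_nonneg h.2 hf hg⟩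
  · exact (summable_mul_right_iff hj₀).mp (h.comp_injective (Prod.mk_left_injective j₀))
  · exact (summable_mul_left_iff hi₀).mp (h.comp_injective (Prod.mk_right_injective i₀))

lemma summable_two_mul_nat_add_one_rpow_neg_iff {s : ℝ} :
    Summable (fun k : ℕ => (2 * (k : ℝ) + 1) ^ (-s)) ↔ 1 < s := by
  have hterm (k : ℕ) :
      (2 * (k : ℝ) + 1) ^ (-s) = 2 ^ (-s) * (1 / |(k : ℝ) + 1 / 2| ^ s) := by
    rw [abs_of_pos (by positivity), one_div, ← rpow_neg (by positivity),
      ← mul_rpow (by norm_num) (by positivity)]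
    ring_nf
  simp_rw [hterm]
  rw [summable_mul_left_iff (by positivity), summable_one_div_nat_add_rpow]

lemma pow_mul_rpow_pow_mul {a b x : ℝ} (hb : 0 ≤ b) (hx : 0 ≤ x) (t : ℝ) (n : ℕ) :
    a ^ n * (b ^ n * x) ^ t = (a * b ^ t) ^ n * x ^ t := by
  rw [mul_rpow (by positivity) hx, ← rpow_natCast_mul hb, mul_comm (n : ℝ),
    rpow_mul_natCast hb, mul_pow, mul_assoc]

lemma mul_rpow_neg_lt_one_iff {a b s : ℝ} (ha : 0 < a) (hb : 1 < b) :
    a * b ^ (-s) < 1 ↔ log a / log b < s := by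
  rw [div_lt_iff₀ (log_pos hb), rpow_neg (by positivity), mul_inv_lt_iff₀ (by positivity),
    one_mul, lt_rpow_iff_log_lt ha (by positivity)]

lemma one_lt_log_three_div_log_two : 1 < log 3 / log 2 := by
  rw [one_lt_div (log_pos one_lt_two)]
  exact log_lt_log two_pos (by norm_num)

/-- The double series `∑_{n≥1} 3^{n-1} ∑_{k≥0} (2^{n-1}(2k+1))^{-s}` (eigenvalues
`2^{n-1}(2k+1)` with multiplicity `3^{n-1}`) converges iff `s > log 3 / log 2`.
Here `p.1 = n-1` and `p.2 = k`. -/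
theorem sierpinski_eigenvalue_summability (s : ℝ) :
    Summable (fun p : ℕ × ℕ =>
        (3 : ℝ) ^ p.1 * ((2 : ℝ) ^ p.1 * (2 * (p.2 : ℝ) + 1)) ^ (-s)) ↔
      Real.log 3 / Real.log 2 < s := by
  set r : ℝ := 3 * 2 ^ (-s)
  have hr : 0 < r := by positivity
  have hterm (p : ℕ × ℕ) : (3 : ℝ) ^ p.1 * ((2 : ℝ) ^ p.1 * (2 * (p.2 : ℝ) + 1)) ^ (-s) =
      r ^ p.1 * (2 * (p.2 : ℝ) + 1) ^ (-s) :=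
    pow_mul_rpow_pow_mul zero_le_two (by positivity) _ _
  simp_rw [hterm]
  refine (summable_prod_mul_iff (f := (r ^ ·)) (g := fun k : ℕ => (2 * (k : ℝ) + 1) ^ (-s))
    (i₀ := 0) (j₀ := 0) (fun n => by positivity) (fun k => by positivity) (by simp)
    (by simp)).trans ?_
  rw [summable_geometric_iff_norm_lt_one, norm_of_nonneg hr.le,
    summable_two_mul_nat_add_one_rpow_neg_iff, mul_rpow_neg_lt_one_iff three_pos one_lt_two]
  exact ⟨And.left, fun hs => ⟨hs, one_lt_log_three_div_log_two.trans hs⟩⟩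
end
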